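/- arXiv:math/0504003 — 3 statements merged into one kernel-verified Lean document; each statement's English description precedes it below -/
import Mathlib

section
/- Let p be an odd prime, l ∈ ℕ, z ∈ ℤ(p^∞)(l,1)_e (i.e., z is a sum Σ m_i e_{k_i} over distinct indices with Σ|m_i| ≤ l), and y = e_{n₁} + ⋯ + e_{n_f} with n₁ < ⋯ < n_f, l < f, and n_i < n_{i+1} − l. Then for every integer μ with 0 < |μ| ≤ l, the order of μy + z is at least p^{n_{f−l} − l}, which is at least p^{n₁ − l}. -/
open Filter Topology

noncomputable section

/-- The Prüfer `p`-group, as the subgroup of `ℚ/ℤ` of elements of `p`-power order. -/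
def Prufer (p : ℕ) : AddSubgroup (AddCircle (1 : ℚ)) where
  carrier := {x | ∃ n : ℕ, p ^ n • x = 0}
  zero_mem' := ⟨0, smul_zero _⟩
  add_mem' := by
    rintro a b ⟨m, hm⟩ ⟨n, hn⟩
    refine ⟨m + n, ?_⟩
    have ha : p ^ (m + n) • a = 0 := by
      rw [pow_add, mul_comm, mul_smul, hm, smul_zero]
    have hb : p ^ (m + n) • b = 0 := by
      rw [pow_add, mul_smul, hn, smul_zero]
    rw [smul_add, ha, hb, add_zero]
  neg_mem' := by
    rintro a ⟨n, hn⟩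
    exact ⟨n, by rw [smul_neg, hn, neg_zero]⟩

/-- The element `e_n = 1/p^n` of the Prüfer `p`-group. -/
def eP (p n : ℕ) : Prufer p :=
  ⟨((((p : ℚ) ^ n)⁻¹ : ℚ) : AddCircle (1 : ℚ)), n, by
    rcases eq_or_ne ((p : ℚ) ^ n) 0 with h | h
    · simp [h]
    · have key : ((p ^ n : ℕ) • ((((p : ℚ) ^ n)⁻¹ : ℚ)) : ℚ) = (1 : ℚ) := by
        rw [nsmul_eq_mul]
        push_cast
        field_simp
      calc p ^ n • ((((p : ℚ) ^ n)⁻¹ : ℚ) : AddCircle (1 : ℚ))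
          = (((p ^ n : ℕ) • (((p : ℚ) ^ n)⁻¹ : ℚ) : ℚ) : AddCircle (1 : ℚ)) := by
            norm_cast
        _ = ((1 : ℚ) : AddCircle (1 : ℚ)) := by rw [key]
        _ = 0 := AddCircle.coe_period 1⟩

/-- `{a_k}` is a T-sequence: it converges to `0` in some Hausdorff group topology. -/
def IsTSeq {A : Type*} [AddCommGroup A] (a : ℕ → A) : Prop :=
  ∃ τ : TopologicalSpace A, @IsTopologicalAddGroup A τ _ ∧ @T2Space A τ ∧
    Filter.Tendsto a Filter.atTop (@nhds A τ 0)

/-- The set `A(l,m)` of sums `m₁ a_{k₁} + ⋯ + m_h a_{k_h}` with distinct indices `kᵢ ≥ m`,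
nonzero integer coefficients, and `Σ|mᵢ| ≤ l`. -/
def TSet {A : Type*} [AddCommGroup A] (a : ℕ → A) (l m : ℕ) : Set A :=
  {x | ∃ (s : Finset ℕ) (c : ℕ → ℤ), (∀ k ∈ s, m ≤ k) ∧ (∀ k ∈ s, c k ≠ 0) ∧
    (∑ k ∈ s, (c k).natAbs) ≤ l ∧ x = ∑ k ∈ s, c k • a k}

/-- `σ` is a finitely supported representation `y = Σ_{n ≥ 1} σ_n e_n`. -/
def IsRep (p : ℕ) (y : Prufer p) (σ : ℕ →₀ ℤ) : Prop :=
  σ 0 = 0 ∧ y = ∑ n ∈ σ.support, σ n • eP p n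

/-- `σ` is the canonical form of `y`: a representation with `|σ_n| ≤ (p-1)/2`. -/
def IsCanonical (p : ℕ) (y : Prufer p) (σ : ℕ →₀ ℤ) : Prop :=
  IsRep p y σ ∧ ∀ n, 2 * (σ n).natAbs ≤ p - 1


/-!
Choose `K` with all indices `≤ K`; then `μy + z = A • e_K` for an integer `A`, and it suffices to
show `p^T ∤ A` for `T = K - n_{f-l-1} + l + 1`. Write integers in balanced base `p` (digits in
`[-(p-1)/2, (p-1)/2]`) and let the mass of `n` be the sum of the absolute values of its lowest
`T` digits. Adding `±p^j` changes the mass by at most one, so if `p^T ∣ A` the `y`-part of `A`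
has mass at most `Σ|cₖ| ≤ l`. But modulo `p^T` the `y`-part consists of the `l + 1` blocks
`μ p^{K - nᵢ}`, `i ≥ f - l - 1`, which the gaps `nᵢ + l < n_{i+1}` keep apart, so its digits are
`l + 1` disjoint copies of the (nonzero) digits of `μ`, of mass at least `l + 1`.
-/

open Finset

namespace BalancedDigits

variable (h : ℕ)

/-- Balanced base-`(2h+1)` digits: `n = digit h n + (2h+1) * carry h n` with `|digit h n| ≤ h`.
For `p = 2h+1` these are the coefficients of the canonical form of `n / p^K` in `ℤ(p^∞)`. -/
def digit (n : ℤ) : ℤ := (n + h) % (2 * h + 1) - h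

def carry (n : ℤ) : ℤ := (n + h) / (2 * h + 1)

def mass : ℕ → ℤ → ℕ
  | 0, _ => 0
  | K + 1, n => (digit h n).natAbs + mass K (carry h n)

variable {h}

lemma digit_add_mul_carry (n : ℤ) : digit h n + (2 * h + 1) * carry h n = n := by
  have := Int.emod_add_mul_ediv (n + h) (2 * h + 1)
  unfold digit carry
  linarith

lemma abs_digit_le (n : ℤ) : |digit h n| ≤ h := by
  have h0 := Int.emod_nonneg (n + h) (by positivity : (2 * h + 1 : ℤ) ≠ 0)
  have h1 := Int.emod_lt_of_pos (n + h) (by positivity : (0 : ℤ) < 2 * h + 1)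
  unfold digit
  rw [abs_le]
  constructor <;> linarith

lemma digit_add_mul (n q : ℤ) : digit h (n + (2 * h + 1) * q) = digit h n := by
  rw [digit, digit, add_right_comm, Int.add_mul_emod_self_left]

lemma carry_add_mul (n q : ℤ) : carry h (n + (2 * h + 1) * q) = carry h n + q := by
  rw [carry, carry, add_right_comm, Int.add_mul_ediv_left _ _ (by positivity)]

lemma digit_of_abs_le {d : ℤ} (hd : |d| ≤ h) : digit h d = d := by
  rw [abs_le] at hd
  rw [digit, Int.emod_eq_of_lt (by linarith) (by linarith), add_sub_cancel_right]

lemma carry_of_abs_le {d : ℤ} (hd : |d| ≤ h) : carry h d = 0 := by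
  rw [abs_le] at hd
  exact Int.ediv_eq_zero_of_lt (by linarith) (by linarith)

lemma carry_zero : carry h 0 = 0 := carry_of_abs_le (by simp)

lemma mass_succ (K : ℕ) (n : ℤ) :
    mass h (K + 1) n = (digit h n).natAbs + mass h K (carry h n) := rfl

lemma mass_succ_add_mul {d : ℤ} (hd : |d| ≤ h) (K : ℕ) (q : ℤ) :
    mass h (K + 1) (d + (2 * h + 1) * q) = d.natAbs + mass h K q := by
  rw [mass_succ, digit_add_mul, carry_add_mul, digit_of_abs_le hd, carry_of_abs_le hd, zero_add]

lemma mass_zero_right (K : ℕ) : mass h K 0 = 0 := by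
  induction K with
  | zero => rfl
  | succ K ih => simpa [ih] using mass_succ_add_mul (h := h) (d := 0) (by simp) K 0

lemma mass_add_pow_mul (K : ℕ) (n q : ℤ) : mass h K (n + (2 * h + 1) ^ K * q) = mass h K n := by
  induction K generalizing n with
  | zero => rfl
  | succ K ih => rw [mass_succ, mass_succ, pow_succ', mul_assoc, digit_add_mul, carry_add_mul, ih]

lemma carry_iterate_add_pow_mul (m : ℕ) (n q : ℤ) :
    (carry h)^[m] (n + (2 * h + 1) ^ m * q) = (carry h)^[m] n + q := by
  induction m generalizing n with
  | zero => simp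
  | succ m ih =>
    rw [Function.iterate_succ_apply, Function.iterate_succ_apply, pow_succ', mul_assoc,
      carry_add_mul, ih]

lemma mass_add (m K : ℕ) (n : ℤ) :
    mass h (m + K) n = mass h m n + mass h K ((carry h)^[m] n) := by
  induction m generalizing n with
  | zero => simp [mass]
  | succ m ih =>
    rw [Nat.add_right_comm, mass_succ, ih, mass_succ, Function.iterate_succ_apply, add_assoc]

lemma mass_neg (K : ℕ) (n : ℤ) : mass h K (-n) = mass h K n := by
  induction K generalizing n with
  | zero => rfl
  | succ K ih =>
    have hn : -digit h n + (2 * h + 1) * -carry h n = -n := by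
      linear_combination -digit_add_mul_carry (h := h) n
    rw [← hn, mass_succ_add_mul (by rw [abs_neg]; exact abs_digit_le n), Int.natAbs_neg, ih,
      mass_succ]

/-- A digit `h` turns into `-h`, of the same size, and passes the carry on; the mass grows (by one)
only at the digit where the carry stops. -/
lemma mass_add_pow_le (K j : ℕ) (n : ℤ) : mass h K (n + (2 * h + 1) ^ j) ≤ mass h K n + 1 := by
  induction K generalizing n j with
  | zero => simp [mass]
  | succ K ih =>
    obtain ⟨d, q, hd, rfl⟩ : ∃ (d q : ℤ), |d| ≤ h ∧ n = d + (2 * h + 1) * q :=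
      ⟨_, _, abs_digit_le n, (digit_add_mul_carry n).symm⟩
    rw [mass_succ_add_mul hd]
    cases j with
    | succ j =>
      rw [pow_succ', add_assoc, ← mul_add, mass_succ_add_mul hd]
      have := ih j q
      omega
    | zero =>
      rw [pow_zero]
      by_cases hd1 : |d + 1| ≤ h
      · rw [add_right_comm, mass_succ_add_mul hd1]
        omega
      · have hdh : d = h := by rw [abs_le] at hd hd1; omega
        have hcarry : d + (2 * h + 1) * q + 1 = -h + (2 * h + 1) * (q + (2 * h + 1) ^ 0) := by
          rw [hdh]; ring
        rw [hcarry, mass_succ_add_mul (by simp)]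
        have := ih 0 q
        omega

lemma mass_sub_pow_le (K j : ℕ) (n : ℤ) : mass h K (n - (2 * h + 1) ^ j) ≤ mass h K n + 1 := by
  rw [← mass_neg, ← mass_neg K n, neg_sub, sub_eq_neg_add]
  exact mass_add_pow_le K j (-n)

lemma mass_add_mul_pow_le (K j : ℕ) (n c : ℤ) :
    mass h K (n + c * (2 * h + 1) ^ j) ≤ mass h K n + c.natAbs := by
  induction c using Int.induction_on with
  | zero => simp
  | succ i ih =>
    have := mass_add_pow_le (h := h) K j (n + i * (2 * h + 1) ^ j)
    rw [add_mul, one_mul, ← add_assoc]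
    omega
  | pred i ih =>
    have := mass_sub_pow_le (h := h) K j (n + -i * (2 * h + 1) ^ j)
    rw [sub_mul, one_mul, ← add_sub_assoc]
    omega

lemma mass_add_sum_le {ι : Type*} (K : ℕ) (n : ℤ) (s : Finset ι) (c : ι → ℤ) (j : ι → ℕ) :
    mass h K (n + ∑ k ∈ s, c k * (2 * h + 1) ^ j k) ≤ mass h K n + ∑ k ∈ s, (c k).natAbs := by
  classical
  induction s using Finset.induction_on with
  | empty => simp
  | insert k s hk ih =>
    rw [sum_insert hk, sum_insert hk, add_left_comm]
    have := mass_add_mul_pow_le (h := h) K (j k) (n + ∑ k ∈ s, c k * (2 * h + 1) ^ j k) (c k)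
    rw [add_comm (c k * _), ← add_assoc]
    omega

lemma mass_le_of_dvd {ι : Type*} {K : ℕ} {n : ℤ} {s : Finset ι} {c : ι → ℤ} {j : ι → ℕ}
    (hdvd : (2 * h + 1 : ℤ) ^ K ∣ n + ∑ k ∈ s, c k * (2 * h + 1) ^ j k) :
    mass h K n ≤ ∑ k ∈ s, (c k).natAbs := by
  obtain ⟨q, hq⟩ := hdvd
  have hn : n = -(0 + ∑ k ∈ s, c k * (2 * h + 1) ^ j k) + (2 * h + 1) ^ K * q := by
    linear_combination hq
  rw [hn, mass_add_pow_mul, mass_neg]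
  simpa [mass_zero_right] using mass_add_sum_le K 0 s c j

lemma natAbs_carry_lt (h1 : 1 ≤ h) {n : ℤ} (hn : n ≠ 0) : (carry h n).natAbs < n.natAbs := by
  obtain ⟨d, q, hd, rfl⟩ : ∃ (d q : ℤ), |d| ≤ h ∧ n = d + (2 * h + 1) * q :=
    ⟨_, _, abs_digit_le n, (digit_add_mul_carry n).symm⟩
  rw [carry_add_mul, carry_of_abs_le hd, zero_add]
  zify
  rcases eq_or_ne q 0 with rfl | hq
  · simpa using hn
  have hq1 : 1 ≤ |q| := Int.one_le_abs hq
  have hh1 : (1 : ℤ) ≤ h := by exact_mod_cast h1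
  have hPq : |(2 * h + 1) * q| = (2 * h + 1) * |q| := by
    rw [abs_mul, abs_of_pos (by positivity)]
  have htri : |(2 * h + 1) * q| ≤ |d + (2 * h + 1) * q| + |d| := by
    calc |(2 * h + 1) * q| = |(d + (2 * h + 1) * q) + -d| := by congr 1; ring
      _ ≤ |d + (2 * h + 1) * q| + |d| := by simpa using abs_add_le (d + (2 * h + 1) * q) (-d)
  nlinarith

lemma carry_iterate_eq_zero (h1 : 1 ≤ h) {m : ℕ} {n : ℤ} (hn : n.natAbs ≤ m) :
    (carry h)^[m] n = 0 := by
  induction m generalizing n with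
  | zero => simpa using hn
  | succ m ih =>
    rw [Function.iterate_succ_apply]
    rcases eq_or_ne n 0 with rfl | hn0
    · exact ih (by simp [carry_zero])
    · exact ih (by have := natAbs_carry_lt h1 hn0; omega)

lemma eq_pow_mul_of_mass_eq_zero {m : ℕ} {n : ℤ} (h0 : mass h m n = 0) :
    n = (2 * h + 1) ^ m * (carry h)^[m] n := by
  induction m generalizing n with
  | zero => simp
  | succ m ih =>
    rw [mass_succ, Nat.add_eq_zero_iff, Int.natAbs_eq_zero] at h0
    rw [Function.iterate_succ_apply, pow_succ', mul_assoc, ← ih h0.2]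
    linear_combination -(digit_add_mul_carry (h := h) n) + h0.1

lemma one_le_mass (h1 : 1 ≤ h) {l : ℕ} {μ : ℤ} (hμ0 : μ ≠ 0) (hμl : μ.natAbs ≤ l) :
    1 ≤ mass h l μ := by
  by_contra! hzero
  have := eq_pow_mul_of_mass_eq_zero (h := h) (m := l) (n := μ) (by omega)
  rw [carry_iterate_eq_zero h1 hμl, mul_zero] at this
  exact hμ0 this

lemma mass_eq_of_natAbs_le (h1 : 1 ≤ h) {l K : ℕ} {μ : ℤ} (hμl : μ.natAbs ≤ l) (hlK : l ≤ K) :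
    mass h K μ = mass h l μ := by
  obtain ⟨r, rfl⟩ := Nat.exists_eq_add_of_le hlK
  rw [mass_add, carry_iterate_eq_zero h1 hμl, mass_zero_right, add_zero]

/-- If `n` has at most `m` balanced digits, the digits of `n + (2h+1)^m q` are those of `n`
followed by those of `q`. -/
lemma mass_add_pow_mul_of_carry_iterate_eq_zero {m : ℕ} {n : ℤ} (hn : (carry h)^[m] n = 0)
    (K : ℕ) (q : ℤ) : mass h (m + K) (n + (2 * h + 1) ^ m * q) = mass h m n + mass h K q := by
  rw [mass_add, mass_add_pow_mul, carry_iterate_add_pow_mul, hn, zero_add]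

lemma carry_iterate_add_pow_mul_of_carry_iterate_eq_zero {m : ℕ} {n : ℤ}
    (hn : (carry h)^[m] n = 0) (K : ℕ) (q : ℤ) :
    (carry h)^[K + m] (n + (2 * h + 1) ^ m * q) = (carry h)^[K] q := by
  rw [Function.iterate_add_apply, carry_iterate_add_pow_mul, hn, zero_add]

section Blocks

variable {ι : Type*} {t : Finset ι} {a : ι → ℕ} {l : ℕ} {μ : ℤ}

lemma carry_iterate_sum_mul_pow_eq_zero (h1 : 1 ≤ h) (hμl : μ.natAbs ≤ l)
    (hsep : (t : Set ι).Pairwise fun i i' => a i + l ≤ a i' ∨ a i' + l ≤ a i)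
    {K : ℕ} (hK : ∀ i ∈ t, a i + l ≤ K) :
    (carry h)^[K] (∑ i ∈ t, μ * (2 * h + 1) ^ a i) = 0 := by
  classical
  induction t using Finset.induction_on_max_value a generalizing K with
  | empty => simpa using Function.iterate_fixed carry_zero K
  | insert i₀ s hi₀ hmax ih =>
    rw [coe_insert, Set.pairwise_insert] at hsep
    obtain ⟨r, rfl⟩ := Nat.exists_eq_add_of_le (hK i₀ (mem_insert_self i₀ s))
    have hs : ∀ i ∈ s, a i + l ≤ a i₀ := fun i hi => by
      have := hsep.2 i hi (ne_of_mem_of_not_mem hi hi₀).symm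
      have := hmax i hi
      omega
    rw [sum_insert hi₀, add_comm (μ * _), mul_comm μ, add_assoc, add_comm (a i₀),
      carry_iterate_add_pow_mul_of_carry_iterate_eq_zero (ih hsep.1 hs),
      carry_iterate_eq_zero h1 (by omega)]

lemma mass_sum_mul_pow (h1 : 1 ≤ h) (hμl : μ.natAbs ≤ l)
    (hsep : (t : Set ι).Pairwise fun i i' => a i + l ≤ a i' ∨ a i' + l ≤ a i)
    {K : ℕ} (hK : ∀ i ∈ t, a i + l ≤ K) :
    mass h K (∑ i ∈ t, μ * (2 * h + 1) ^ a i) = #t * mass h l μ := by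
  classical
  induction t using Finset.induction_on_max_value a generalizing K with
  | empty => simp [mass_zero_right]
  | insert i₀ s hi₀ hmax ih =>
    rw [coe_insert, Set.pairwise_insert] at hsep
    obtain ⟨r, rfl⟩ := Nat.exists_eq_add_of_le (hK i₀ (mem_insert_self i₀ s))
    have hs : ∀ i ∈ s, a i + l ≤ a i₀ := fun i hi => by
      have := hsep.2 i hi (ne_of_mem_of_not_mem hi hi₀).symm
      have := hmax i hi
      omega
    rw [sum_insert hi₀, add_comm (μ * _), mul_comm μ, add_assoc,
      mass_add_pow_mul_of_carry_iterate_eq_zero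
        (carry_iterate_sum_mul_pow_eq_zero h1 hμl hsep.1 hs),
      ih hsep.1 hs, mass_eq_of_natAbs_le h1 hμl (le_add_right le_rfl : l ≤ l + r),
      card_insert_of_notMem hi₀]
    ring

theorem not_pow_dvd_sum_add_sum (h1 : 1 ≤ h) (hμ0 : μ ≠ 0) (hμl : μ.natAbs ≤ l)
    (hsep : (t : Set ι).Pairwise fun i i' => a i + l ≤ a i' ∨ a i' + l ≤ a i)
    {T : ℕ} (hT : ∀ i ∈ t, a i + l ≤ T) {κ : Type*} (s : Finset κ) (c : κ → ℤ) (j : κ → ℕ)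
    (hc : ∑ k ∈ s, (c k).natAbs < #t) :
    ¬ (2 * h + 1 : ℤ) ^ T ∣ ∑ i ∈ t, μ * (2 * h + 1) ^ a i + ∑ k ∈ s, c k * (2 * h + 1) ^ j k := by
  intro hdvd
  have hmass := mass_le_of_dvd hdvd
  rw [mass_sum_mul_pow h1 hμl hsep hT] at hmass
  have := Nat.le_mul_of_pos_right #t (one_le_mass h1 hμ0 hμl)
  omega

end Blocks

end BalancedDigits

lemma eP_eq_nsmul {p m K : ℕ} (hp : p ≠ 0) (hmK : m ≤ K) : eP p m = p ^ (K - m) • eP p K := by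
  obtain ⟨r, rfl⟩ := Nat.exists_eq_add_of_le hmK
  apply Subtype.ext
  change ((((p : ℚ) ^ m)⁻¹ : ℚ) : AddCircle (1 : ℚ)) =
    p ^ (m + r - m) • ((((p : ℚ) ^ (m + r))⁻¹ : ℚ) : AddCircle (1 : ℚ))
  rw [Nat.add_sub_cancel_left, ← AddCircle.coe_nsmul, nsmul_eq_mul]
  have : (p : ℚ) ≠ 0 := by exact_mod_cast hp
  push_cast
  rw [pow_add]
  field_simp

lemma sum_zsmul_eP {ι : Type*} {p K : ℕ} (hp : p ≠ 0) (s : Finset ι) (c : ι → ℤ) (k : ι → ℕ)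
    (hk : ∀ i ∈ s, k i ≤ K) :
    ∑ i ∈ s, c i • eP p (k i) = (∑ i ∈ s, c i * (p : ℤ) ^ (K - k i)) • eP p K := by
  rw [sum_smul]
  refine sum_congr rfl fun i hi => ?_
  rw [eP_eq_nsmul hp (hk i hi), ← natCast_zsmul, smul_smul]
  push_cast
  rfl

lemma addOrderOf_eP {p : ℕ} (hp : p.Prime) (K : ℕ) : addOrderOf (eP p K) = p ^ K := by
  rw [← AddSubgroup.addOrderOf_coe]
  have := AddCircle.addOrderOf_div_of_gcd_eq_one (p := (1 : ℚ)) (m := 1) (n := p ^ K)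
    (pow_pos hp.pos K) (Nat.gcd_one_left _)
  convert this using 2
  change ((((p : ℚ) ^ K)⁻¹ : ℚ) : AddCircle (1 : ℚ)) = _
  push_cast
  ring_nf

lemma nsmul_zsmul_eP_eq_zero_iff {p : ℕ} (hp : p.Prime) {t K : ℕ} (htK : t ≤ K) (A : ℤ) :
    p ^ t • A • eP p K = 0 ↔ (p : ℤ) ^ (K - t) ∣ A := by
  rw [← natCast_zsmul, smul_smul, ← addOrderOf_dvd_iff_zsmul_eq_zero, addOrderOf_eP hp,
    ← Nat.add_sub_cancel' htK]
  push_cast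
  rw [pow_add, Nat.add_sub_cancel_left,
    mul_dvd_mul_iff_left (pow_ne_zero _ (by exact_mod_cast hp.ne_zero))]

lemma pow_le_addOrderOf {G : Type*} [AddMonoid G] {p K s : ℕ} {g : G} (hp : p.Prime)
    (hK : p ^ K • g = 0) (hs : ∀ t < s, p ^ t • g ≠ 0) : p ^ s ≤ addOrderOf g := by
  obtain ⟨d, -, hd⟩ := (Nat.dvd_prime_pow hp).1 (addOrderOf_dvd_of_nsmul_eq_zero hK)
  rw [hd]
  refine Nat.pow_le_pow_right hp.pos (not_lt.1 fun hds => hs d hds ?_)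
  rw [← hd]
  exact addOrderOf_nsmul_eq_zero g

lemma add_lt_of_add_lt_succ {n : ℕ → ℕ} {f l : ℕ} (hgap : ∀ i, i + 1 < f → n i + l < n (i + 1))
    {i j : ℕ} (hij : i < j) (hj : j < f) : n i + l < n j := by
  induction j, hij using Nat.le_induction with
  | base => exact hgap i hj
  | succ j hij ih =>
    have := hgap j hj
    have := ih (by omega)
    omega

lemma le_of_add_lt_succ {n : ℕ → ℕ} {f l : ℕ} (hgap : ∀ i, i + 1 < f → n i + l < n (i + 1))
    {i j : ℕ} (hij : i ≤ j) (hj : j < f) : n i ≤ n j := by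
  rcases hij.lt_or_eq with hij | rfl
  · have := add_lt_of_add_lt_succ hgap hij hj
    omega
  · rfl

open BalancedDigits in
theorem not_pow_dvd_of_gap {h : ℕ} (h1 : 1 ≤ h) {n : ℕ → ℕ} {l f K : ℕ} (hlf : l < f)
    (hgap : ∀ i, i + 1 < f → n i + l < n (i + 1)) (hK : ∀ i < f, n i ≤ K)
    {μ : ℤ} (hμ0 : μ ≠ 0) (hμl : μ.natAbs ≤ l) {κ : Type*} (s : Finset κ) (c : κ → ℤ)
    (j : κ → ℕ) (hc : ∑ k ∈ s, (c k).natAbs ≤ l) :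
    ¬ (2 * h + 1 : ℤ) ^ (K - n (f - l - 1) + l + 1) ∣
      ∑ i ∈ range f, μ * (2 * h + 1) ^ (K - n i) + ∑ k ∈ s, c k * (2 * h + 1) ^ j k := by
  set F := f - l - 1
  set T := K - n F + l + 1
  have hlow : (2 * h + 1 : ℤ) ^ T ∣ ∑ i ∈ range F, μ * (2 * h + 1) ^ (K - n i) := by
    refine dvd_sum fun i hi => Dvd.dvd.mul_left (pow_dvd_pow _ ?_) _
    have := add_lt_of_add_lt_succ hgap (mem_range.1 hi) (by omega)
    have := hK F (by omega)
    omega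
  rw [← sum_range_add_sum_Ico _ (by omega : F ≤ f), add_assoc, dvd_add_right hlow]
  refine not_pow_dvd_sum_add_sum h1 hμ0 hμl ?_ (fun i hi => ?_) s c j ?_
  · intro i hi i' hi' hne
    simp only [coe_Ico, Set.mem_Ico] at hi hi'
    rcases hne.lt_or_gt with hlt | hlt
    · have := add_lt_of_add_lt_succ hgap hlt hi'.2
      have := hK i' hi'.2
      omega
    · have := add_lt_of_add_lt_succ hgap hlt hi.2
      have := hK i hi.2
      omega
  · rw [mem_Ico] at hi
    have := le_of_add_lt_succ hgap hi.1 hi.2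
    have := hK i hi.2
    omega
  · rw [Nat.card_Ico]
    omega

theorem stmt16_general (p : ℕ) (hp : p.Prime) (hodd : p ≠ 2) (l f : ℕ) (hlf : l < f)
    (z : Prufer p) (hz : z ∈ TSet (fun k => eP p k) l 1)
    (n : ℕ → ℕ)
    (hgap : ∀ i, i + 1 < f → n i + l < n (i + 1))
    (y : Prufer p) (hy : y = ∑ i ∈ Finset.range f, eP p (n i))
    (μ : ℤ) (hμ0 : μ ≠ 0) (hμl : μ.natAbs ≤ l) :
    p ^ (n 0 - l) ≤ p ^ (n (f - l - 1) - l) ∧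
    p ^ (n (f - l - 1) - l) ≤ addOrderOf (μ • y + z) := by
  obtain ⟨s, c, -, -, hc, rfl⟩ := hz
  obtain ⟨h, hph⟩ := hp.odd_of_ne_two hodd
  have hP : (p : ℤ) = 2 * h + 1 := by rw [hph]; push_cast; ring
  have h1 : 1 ≤ h := by have := hp.two_le; omega
  set K := (range f).sup n + s.sup id
  have hnK : ∀ i < f, n i ≤ K := fun i hi =>
    (le_sup (f := n) (mem_range.2 hi)).trans (Nat.le_add_right _ _)
  have hsK : ∀ k ∈ s, k ≤ K := fun k hk => (le_sup (f := id) hk).trans (Nat.le_add_left _ _)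
  have hX : μ • y + ∑ k ∈ s, c k • eP p k =
      (∑ i ∈ range f, μ * (p : ℤ) ^ (K - n i) + ∑ k ∈ s, c k * (p : ℤ) ^ (K - k)) • eP p K := by
    rw [hy, smul_sum, sum_zsmul_eP hp.ne_zero _ _ _ fun i hi => hnK i (mem_range.1 hi),
      sum_zsmul_eP hp.ne_zero s c (fun k => k) hsK, add_zsmul]
  refine ⟨Nat.pow_le_pow_right hp.pos
    (Nat.sub_le_sub_right (le_of_add_lt_succ hgap (Nat.zero_le _) (by omega)) l), ?_⟩
  rw [hX]
  refine pow_le_addOrderOf hp ((nsmul_zsmul_eP_eq_zero_iff hp le_rfl _).2 (by simp))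
    fun t ht hzero => ?_
  have hFK := hnK (f - l - 1) (by omega)
  rw [nsmul_zsmul_eP_eq_zero_iff hp (t := t) (K := K) (by omega), hP] at hzero
  exact not_pow_dvd_of_gap h1 hlf hgap hnK hμ0 hμl s c _ hc
    ((pow_dvd_pow _ (by omega)).trans hzero)

/-- For `z ∈ ℤ(p^∞)(l,1)_e` and `y = e_{n₁} + ⋯ + e_{n_f}` with `l < f` and
`nᵢ < n_{i+1} - l`, one has `o(μy + z) ≥ p^{n_{f-l} - l} ≥ p^{n₁ - l}` for all
integers `μ` with `0 < |μ| ≤ l`. -/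
theorem stmt16 (p : ℕ) (hp : p.Prime) (hodd : p ≠ 2) (l f : ℕ) (hlf : l < f)
    (z : Prufer p) (hz : z ∈ TSet (fun k => eP p k) l 1)
    (n : ℕ → ℕ) (hpos : 0 < n 0)
    (hmono : ∀ i, i + 1 < f → n i < n (i + 1))
    (hgap : ∀ i, i + 1 < f → n i + l < n (i + 1))
    (y : Prufer p) (hy : y = ∑ i ∈ Finset.range f, eP p (n i))
    (μ : ℤ) (hμ0 : μ ≠ 0) (hμl : μ.natAbs ≤ l) :
    p ^ (n 0 - l) ≤ p ^ (n (f - l - 1) - l) ∧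
    p ^ (n (f - l - 1) - l) ≤ addOrderOf (μ • y + z) :=
  stmt16_general p hp hodd l f hlf z hz n hgap y hy μ hμ0 hμl
end
end

section
/- Let χ: ℤ(p^∞) → 𝕋 = ℝ/ℤ be a character corresponding to the p-adic integer Σ α_n p^n (0 ≤ α_n ≤ p−1), let {n_k} be increasing with n_{k+1} − n_k → ∞, and let γ ∈ (0,1). Then χ(e_{n_k}) → γ in 𝕋 if and only if r_k := (Σ_{l=n_k}^{n_{k+1}−1} α_l p^{l−n_k}) / p^{n_{k+1}−n_k} → γ in ℝ. -/
/-!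
Write `x_m ∈ [0, 1)` for the lift of `χ(e_m)`. Splitting the digit sum at `n_k` gives
`x_{n_{k+1}} = x_{n_k} / p^{n_{k+1} - n_k} + r_k`, and the first term tends to `0` because the
gaps tend to infinity. Since `γ` lies in the interior of `[0, 1)`, where the quotient map
`ℝ → 𝕋` is a local homeomorphism, `x_{n_k} → γ` in `𝕋` iff it does in `ℝ`, iff `r_k → γ`.
-/

open Filter Topology Finset

/-- Lift to `[0, 1)` of `χ(e_m) = (Σ_{l<m} α_l b^l) / b^m`. -/
noncomputable def digitPrefixFrac (b : ℕ) (α : ℕ → ℕ) (m : ℕ) : ℝ :=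
  ((∑ l ∈ range m, α l * b ^ l : ℕ) : ℝ) / (b : ℝ) ^ m

/-- `r_k = digitBlockFrac p α n_k n_{k+1}`. -/
noncomputable def digitBlockFrac (b : ℕ) (α : ℕ → ℕ) (m m' : ℕ) : ℝ :=
  ((∑ l ∈ Ico m m', α l * b ^ (l - m) : ℕ) : ℝ) / (b : ℝ) ^ (m' - m)

theorem Nat.sum_range_mul_pow_lt {b : ℕ} {α : ℕ → ℕ} (hα : ∀ i, α i < b) (m : ℕ) :
    ∑ l ∈ range m, α l * b ^ l < b ^ m := by
  induction m with
  | zero => simp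
  | succ m ih =>
    rw [sum_range_succ, pow_succ]
    nlinarith [Nat.mul_le_mul_right (b ^ m) (Nat.succ_le_of_lt (hα m))]

theorem Nat.sum_range_mul_pow_eq_add (b : ℕ) (α : ℕ → ℕ) {m m' : ℕ} (h : m ≤ m') :
    ∑ l ∈ range m', α l * b ^ l =
      ∑ l ∈ range m, α l * b ^ l + (∑ l ∈ Ico m m', α l * b ^ (l - m)) * b ^ m := by
  rw [range_eq_Ico, range_eq_Ico, ← sum_Ico_consecutive _ (Nat.zero_le m) h, sum_mul]
  congr 1
  refine sum_congr rfl fun l hl => ?_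
  rw [mul_assoc, ← pow_add, Nat.sub_add_cancel (mem_Ico.1 hl).1]

theorem digitPrefixFrac_mem_Ico {b : ℕ} {α : ℕ → ℕ} (hα : ∀ i, α i < b) (m : ℕ) :
    digitPrefixFrac b α m ∈ Set.Ico 0 1 := by
  have hb : (0 : ℝ) < (b : ℝ) ^ m := pow_pos (by exact_mod_cast (Nat.zero_le _).trans_lt (hα 0)) m
  refine ⟨by unfold digitPrefixFrac; positivity, (div_lt_one hb).2 ?_⟩
  exact_mod_cast Nat.sum_range_mul_pow_lt hα m

theorem digitPrefixFrac_eq_div_add_digitBlockFrac {b : ℕ} (hb : b ≠ 0) (α : ℕ → ℕ) {m m' : ℕ}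
    (h : m ≤ m') :
    digitPrefixFrac b α m' =
      digitPrefixFrac b α m / (b : ℝ) ^ (m' - m) + digitBlockFrac b α m m' := by
  have hpow : (b : ℝ) ^ m' = (b : ℝ) ^ m * (b : ℝ) ^ (m' - m) := by
    rw [← pow_add, Nat.add_sub_cancel' h]
  unfold digitPrefixFrac digitBlockFrac
  rw [Nat.sum_range_mul_pow_eq_add b α h, hpow]
  push_cast
  field_simp

theorem tendsto_add_iff_of_tendsto_zero {ι G : Type*} [AddCommGroup G] [TopologicalSpace G]
    [IsTopologicalAddGroup G] {f g : ι → G} {l : Filter ι} {x : G} (hg : Tendsto g l (𝓝 0)) :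
    Tendsto (fun i => g i + f i) l (𝓝 x) ↔ Tendsto f l (𝓝 x) :=
  ⟨fun h => by simpa using h.sub hg, fun h => by simpa using hg.add h⟩

namespace AddCircle

variable {𝕜 ι : Type*} [AddCommGroup 𝕜] [LinearOrder 𝕜] [IsOrderedAddMonoid 𝕜] [Archimedean 𝕜]
  [TopologicalSpace 𝕜] [OrderTopology 𝕜] {T : 𝕜} [Fact (0 < T)]

theorem tendsto_coe_nhds_coe_iff {a γ : 𝕜} {x : ι → 𝕜} {l : Filter ι}
    (hx : ∀ i, x i ∈ Set.Ico a (a + T)) (hγ : γ ∈ Set.Ioo a (a + T)) :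
    Tendsto (fun i => (x i : AddCircle T)) l (𝓝 (γ : AddCircle T)) ↔ Tendsto x l (𝓝 γ) := by
  refine ⟨fun h => ?_, fun h => ((AddCircle.continuous_mk' T).tendsto γ).comp h⟩
  have hγa : (γ : AddCircle T) ≠ a := by
    rw [Ne, coe_eq_coe_iff_of_mem_Ico (Set.Ioo_subset_Ico_self hγ)
      (Set.left_mem_Ico.2 (lt_add_of_pos_right a Fact.out))]
    exact hγ.1.ne'
  have := (continuous_subtype_val.continuousAt.comp
    (continuousAt_equivIco T a hγa)).tendsto.comp h
  simpa [Function.comp_def, equivIco_coe_eq (hx _),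
    equivIco_coe_eq (Set.Ioo_subset_Ico_self hγ)] using this

end AddCircle

theorem stmt17_general (p : ℕ) (hp : p.Prime) (α : ℕ → ℕ) (hα : ∀ i, α i ≤ p - 1)
    (n : ℕ → ℕ)
    (hgap : Filter.Tendsto (fun k => n (k + 1) - n k) Filter.atTop Filter.atTop)
    (γ : ℝ) (hγ : γ ∈ Set.Ioo (0 : ℝ) 1) :
    Filter.Tendsto
        (fun k => ((((∑ l ∈ Finset.range (n k), α l * p ^ l : ℕ) : ℝ) / (p : ℝ) ^ n k
          : ℝ) : AddCircle (1 : ℝ)))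
        Filter.atTop (nhds ((γ : ℝ) : AddCircle (1 : ℝ))) ↔
      Filter.Tendsto
        (fun k => (((∑ l ∈ Finset.Ico (n k) (n (k + 1)), α l * p ^ (l - n k) : ℕ) : ℝ) /
          (p : ℝ) ^ (n (k + 1) - n k)))
        Filter.atTop (nhds γ) := by
  have hα' : ∀ i, α i < p := fun i => by have := hp.one_lt; have := hα i; omega
  have hp1 : (1 : ℝ) < p := by exact_mod_cast hp.one_lt
  change Tendsto (fun k => (digitPrefixFrac p α (n k) : AddCircle (1 : ℝ))) _ _ ↔
    Tendsto (fun k => digitBlockFrac p α (n k) (n (k + 1))) _ _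
  have hcarry : Tendsto (fun k => digitPrefixFrac p α (n k) / (p : ℝ) ^ (n (k + 1) - n k))
      atTop (𝓝 0) := by
    refine squeeze_zero (fun k => div_nonneg (digitPrefixFrac_mem_Ico hα' _).1 (by positivity))
      (fun k => ?_) (tendsto_inv_atTop_zero.comp
        ((tendsto_pow_atTop_atTop_of_one_lt hp1).comp hgap))
    exact div_le_div_of_nonneg_right (digitPrefixFrac_mem_Ico hα' _).2.le (by positivity)
      |>.trans_eq (one_div _)
  have hsplit : (fun k => digitPrefixFrac p α (n (k + 1))) =ᶠ[atTop] fun k =>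
      digitPrefixFrac p α (n k) / (p : ℝ) ^ (n (k + 1) - n k) +
        digitBlockFrac p α (n k) (n (k + 1)) :=
    (hgap.eventually_ge_atTop 1).mono fun k hk =>
      digitPrefixFrac_eq_div_add_digitBlockFrac hp.ne_zero α (by omega)
  rw [← tendsto_add_atTop_iff_nat 1,
    AddCircle.tendsto_coe_nhds_coe_iff (a := 0)
      (fun k => by simpa using digitPrefixFrac_mem_Ico hα' _) (by simpa using hγ),
    tendsto_congr' hsplit, tendsto_add_iff_of_tendsto_zero hcarry]

/-- For a character `χ = Σ αₙ pⁿ ∈ ℤ_p` of `ℤ(p^∞)` (acting by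
`χ(e_m) = (Σ_{l<m} α_l p^l)/p^m mod 1`), with `n_{k+1} - n_k → ∞` and `γ ∈ (0,1)`:
`χ(e_{n_k}) → γ` in `𝕋 = ℝ/ℤ` iff
`r_k = (Σ_{l=n_k}^{n_{k+1}-1} α_l p^{l-n_k}) / p^{n_{k+1}-n_k} → γ` in `ℝ`. -/
theorem stmt17 (p : ℕ) (hp : p.Prime) (α : ℕ → ℕ) (hα : ∀ i, α i ≤ p - 1)
    (n : ℕ → ℕ) (hmono : StrictMono n)
    (hgap : Filter.Tendsto (fun k => n (k + 1) - n k) Filter.atTop Filter.atTop)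
    (γ : ℝ) (hγ : γ ∈ Set.Ioo (0 : ℝ) 1) :
    Filter.Tendsto
        (fun k => ((((∑ l ∈ Finset.range (n k), α l * p ^ l : ℕ) : ℝ) / (p : ℝ) ^ n k
          : ℝ) : AddCircle (1 : ℝ)))
        Filter.atTop (nhds ((γ : ℝ) : AddCircle (1 : ℝ))) ↔
      Filter.Tendsto
        (fun k => (((∑ l ∈ Finset.Ico (n k) (n (k + 1)), α l * p ^ (l - n k) : ℕ) : ℝ) /
          (p : ℝ) ^ (n (k + 1) - n k)))
        Filter.atTop (nhds γ) :=
  stmt17_general p hp α hα n hgap γ hγ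
end

section
/- Let B = ℤ/2ℤ ⊕ ⨁_{n=1}^∞ ℤ/3ℤ with any Hausdorff group topology τ. Then the subgroup B₂ = ⨁_{n=1}^∞ ℤ/3ℤ is closed in τ, (B, τ) is the topological direct product of B₁ = ℤ/2ℤ and B₂ (with subspace topologies), and B₁ ∩ n(B, τ) = {0}, where n(B, τ) is the von Neumann radical. -/
open Filter Topology

/-!
Multiplication by `3` is a continuous endomorphism of `B = ℤ/2 × ⨁ ℤ/3` and equals the
projection `b ↦ (b.1, 0)` onto `B₁` along `B₂`. Hence `B₂`, its kernel, is closed, and both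
projections are continuous, which splits the topology as a product. Being closed of index `2`,
`B₂` is also open, so `b ↦ b.1 ∈ ℤ/2` is continuous into a discrete group and, composed with the
embedding `ℤ/2 ↪ ℝ/ℤ`, is a continuous character that is nonzero on `B₁ \ {0}`.
-/

def vonNeumannRadical (G : Type*) [AddCommGroup G] [TopologicalSpace G] : Set G :=
  {g | ∀ χ : G →+ AddCircle (1 : ℝ), Continuous χ → χ g = 0}

theorem AddMonoidHom.continuous_of_isClosed_ker {G A : Type*} [AddGroup G] [TopologicalSpace G]
    [IsTopologicalAddGroup G] [AddGroup A] [Finite A] [TopologicalSpace A] [DiscreteTopology A]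
    (f : G →+ A) (hf : IsClosed (f.ker : Set G)) : Continuous f := by
  have hopen : IsOpen (f.ker : Set G) := f.ker.isOpen_of_isClosed_of_finiteIndex hf
  refine continuous_of_continuousAt_zero f ?_
  rw [ContinuousAt, map_zero, nhds_discrete A, tendsto_pure]
  exact hopen.mem_nhds f.ker.zero_mem

theorem AddMonoidHom.map_eq_zero_of_mem_vonNeumannRadical {G : Type*} [AddCommGroup G]
    [TopologicalSpace G] [IsTopologicalAddGroup G] {n : ℕ} [NeZero n] (f : G →+ ZMod n)
    (hf : IsClosed (f.ker : Set G)) {g : G} (hg : g ∈ vonNeumannRadical G) : f g = 0 :=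
  ZMod.toAddCircle_eq_zero.mp <| hg (ZMod.toAddCircle.comp f) <|
    (continuous_of_discreteTopology (f := ZMod.toAddCircle)).comp (f.continuous_of_isClosed_ker hf)

theorem isClosed_setOf_fst_eq_zero {A B : Type*} [Zero A] [Zero B] [TopologicalSpace (A × B)]
    [T1Space (A × B)] (hp : Continuous fun b : A × B => (b.1, (0 : B))) :
    IsClosed {b : A × B | b.1 = 0} := by
  convert (isClosed_singleton (x := (0 : A × B))).preimage hp using 1
  ext b
  simp [Prod.ext_iff]

theorem eq_instTopologicalSpaceProd_induced {A B : Type*} [AddGroup A] [AddGroup B]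
    [t : TopologicalSpace (A × B)] [IsTopologicalAddGroup (A × B)]
    (hp : Continuous fun b : A × B => (b.1, (0 : B))) :
    t = @instTopologicalSpaceProd A B
      (t.induced fun a : A => ((a, 0) : A × B)) (t.induced fun b : B => ((0, b) : A × B)) := by
  have hq : Continuous fun b : A × B => ((0 : A), b.2) := by
    convert continuous_id.sub hp using 2 with b
    ext <;> simp
  have hprod : @instTopologicalSpaceProd A B (t.induced fun a : A => ((a, 0) : A × B))
      (t.induced fun b : B => ((0, b) : A × B)) =
      t.induced (fun b : A × B => (b.1, 0)) ⊓ t.induced fun b : A × B => (0, b.2) := by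
    simp only [instTopologicalSpaceProd, induced_compose]
    rfl
  rw [hprod]
  refine le_antisymm (le_inf (continuous_iff_le_induced.mp hp) (continuous_iff_le_induced.mp hq)) ?_
  rw [← continuous_id_iff_le]
  have hsplit : (id : A × B → A × B) = (fun b => (b.1, 0)) + (fun b => (0, b.2)) := by
    ext <;> simp
  rw [hsplit]
  exact @Continuous.add _ t _ _ _
    (t.induced (fun b : A × B => (b.1, 0)) ⊓ t.induced fun b : A × B => (0, b.2)) _ _
    (continuous_iff_le_induced.mpr inf_le_left) (continuous_iff_le_induced.mpr inf_le_right)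

theorem three_nsmul_eq {ι : Type*} (b : ZMod 2 × (Π₀ _ : ι, ZMod 3)) : 3 • b = (b.1, 0) := by
  ext i
  · exact (by decide : ∀ x : ZMod 2, 3 • x = x) b.1
  · exact (by decide : ∀ x : ZMod 3, 3 • x = 0) (b.2 i)

/-- For `B = ℤ/2ℤ ⊕ ⨁_{n=1}^∞ ℤ/3ℤ` with any Hausdorff group topology `τ`:
`B₂ = ⨁ ℤ/3ℤ` is closed, `τ` is the product of the subspace topologies on `B₁ = ℤ/2ℤ`
and `B₂`, and `B₁` meets the von Neumann radical trivially. -/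
theorem stmt18 (τ : TopologicalSpace (ZMod 2 × (Π₀ _ : ℕ, ZMod 3)))
    (hτg : @IsTopologicalAddGroup (ZMod 2 × (Π₀ _ : ℕ, ZMod 3)) τ _)
    (hτ2 : @T2Space (ZMod 2 × (Π₀ _ : ℕ, ZMod 3)) τ) :
    @IsClosed _ τ {b : ZMod 2 × (Π₀ _ : ℕ, ZMod 3) | b.1 = 0} ∧
    τ = @instTopologicalSpaceProd (ZMod 2) (Π₀ _ : ℕ, ZMod 3)
        (τ.induced (fun x : ZMod 2 => ((x, 0) : ZMod 2 × (Π₀ _ : ℕ, ZMod 3))))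
        (τ.induced (fun y : Π₀ _ : ℕ, ZMod 3 =>
          ((0, y) : ZMod 2 × (Π₀ _ : ℕ, ZMod 3)))) ∧
    ∀ b : ZMod 2 × (Π₀ _ : ℕ, ZMod 3), b.2 = 0 →
      (∀ χ : (ZMod 2 × (Π₀ _ : ℕ, ZMod 3)) →+ AddCircle (1 : ℝ),
        @Continuous _ _ τ _ χ → χ b = 0) → b = 0 := by
  let _ := τ
  have hp : Continuous fun b : ZMod 2 × (Π₀ _ : ℕ, ZMod 3) => (b.1, (0 : Π₀ _ : ℕ, ZMod 3)) :=
    (continuous_nsmul 3).congr three_nsmul_eq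
  have hB₂ : IsClosed {b : ZMod 2 × (Π₀ _ : ℕ, ZMod 3) | b.1 = 0} :=
    isClosed_setOf_fst_eq_zero hp
  refine ⟨hB₂, eq_instTopologicalSpaceProd_induced hp, fun b hb₂ hb => Prod.ext ?_ hb₂⟩
  exact (AddMonoidHom.fst (ZMod 2) (Π₀ _ : ℕ, ZMod 3)).map_eq_zero_of_mem_vonNeumannRadical hB₂ hb
end
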